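/- arXiv:1203.2552 — 4 statements merged into one kernel-verified Lean document; each statement's English description precedes it below -/
import Mathlib

section
/- Let p be a prime, f ≥ 1, and let r_0, …, r_{f-1} be integers with |r_i| ≤ p for all i, satisfying ∑_{i=0}^{f-1} p^{f-1-i} r_i ≡ 0 (mod p^f − 1). Then either (1) (r_0,…,r_{f-1}) = ±(p−1,…,p−1); or (2) the cyclic list r_0,…,r_{f-1} decomposes into disjoint cyclically-consecutive strings each of which is either of the form ±(−1, p−1, …, p−1, p) (possibly with no occurrences of p−1) or of the form (0,…,0); or (3) p = 2 and (r_0,…,r_{f-1}) = ±(2,…,2). -/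
/-- The set of indices covered by a cyclically-consecutive string starting at `i`
of length `j+1` in `ZMod f`. -/
def coverSet (f : ℕ) [NeZero f] (i : ZMod f) (j : ℕ) : Finset (ZMod f) :=
  (Finset.range (j + 1)).image (fun t : ℕ => (i + (t : ZMod f)))

/-- `(r_i, r_{i+1}, …, r_{i+j}) = ε·(−1, p−1, …, p−1, p)` with `ε ∈ {±1}`,
the middle entries `p−1` occurring `j−1 ≥ 0` times, and the covered indices distinct. -/
def IsPMString (p f : ℕ) [NeZero f] (r : ZMod f → ℤ) (i : ZMod f) (j : ℕ) (ε : ℤ) : Prop :=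
  (ε = 1 ∨ ε = -1) ∧ 1 ≤ j ∧
  r i = -ε ∧
  (∀ t : ℕ, 1 ≤ t → t < j → r (i + (t : ZMod f)) = ε * ((p : ℤ) - 1)) ∧
  r (i + (j : ZMod f)) = ε * (p : ℤ) ∧
  (coverSet f i j).card = j + 1

/-!
Write the carry `m i` for the quotient by `p ^ f - 1` of the cyclic rotation of the digit
string starting at `i`; the congruence makes all rotations divisible, and
`r i = p * m i - m (i + 1)`. At an index where `|m i|` is largest this gives
`(p - 1) * |m i| ≤ p`, so `m` takes values in `{-1, 0, 1}`, except when `p = 2`, where `m = ±2`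
propagates around the cycle and forces `r = ±2`. Since `|r i| ≤ p`, a nonzero carry is followed
by zero or by the same carry, so `m` is either constant `±1` (then `r = ±(p - 1)`) or consists of
zeros and constant runs `ε, …, ε`. The run after a zero at `a` yields the string
`-ε, ε (p - 1), …, ε (p - 1), ε p` starting at `a`, and two consecutive zero carries give
`r i = 0`.
-/

theorem ZMod.forall_of_add_one {f : ℕ} [NeZero f] {P : ZMod f → Prop} (a : ZMod f) (ha : P a)
    (step : ∀ i, P i → P (i + 1)) (i : ZMod f) : P i := by
  have key : ∀ k : ℕ, P (a + k) := by
    intro k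
    induction k with
    | zero => simpa using ha
    | succ k ih => simpa [add_assoc] using step _ ih
  simpa using key (i - a).val

section CyclicValue

variable {R : Type*} [CommRing R] {f : ℕ}

/-- The base-`b` number with digits `r i, r (i + 1), …, r (i + f - 1)`, most significant first. -/
def cyclicValue (b : R) (r : ZMod f → R) (i : ZMod f) : R :=
  ∑ t ∈ Finset.range f, b ^ (f - 1 - t) * r (i + t)

theorem mul_cyclicValue_sub_cyclicValue_add_one [NeZero f] (b : R) (r : ZMod f → R)
    (i : ZMod f) : b * cyclicValue b r i - cyclicValue b r (i + 1) = (b ^ f - 1) * r i := by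
  -- Multiplying by `b` moves every digit up one place, so the two sums agree except for the
  -- leading digit of the first and the last digit `r (i + f) = r i` of the second.
  obtain ⟨n, rfl⟩ : ∃ n, f = n + 1 := Nat.exists_eq_succ_of_ne_zero (NeZero.ne f)
  have hlast : i + 1 + (n : ZMod (n + 1)) = i := by
    rw [add_assoc, add_comm 1, ← Nat.cast_succ, ZMod.natCast_self, add_zero]
  have hshift : ∀ t ∈ Finset.range n,
      b * (b ^ (n + 1 - 1 - (t + 1)) * r (i + ((t + 1 : ℕ) : ZMod (n + 1))))
        = b ^ (n + 1 - 1 - t) * r (i + 1 + (t : ZMod (n + 1))) := by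
    intro t ht
    rw [Finset.mem_range] at ht
    rw [← mul_assoc, ← pow_succ', show n + 1 - 1 - (t + 1) + 1 = n + 1 - 1 - t by omega]
    push_cast
    ring_nf
  simp only [cyclicValue]
  rw [Finset.sum_range_succ', Finset.sum_range_succ, mul_add, Finset.mul_sum,
    Finset.sum_congr rfl hshift, hlast]
  simp only [Nat.cast_zero, add_zero, Nat.sub_zero, add_tsub_cancel_right, tsub_self, pow_zero]
  ring

end CyclicValue

theorem exists_carries_of_dvd {f : ℕ} [NeZero f] {b : ℤ} (hb : b ^ f ≠ 1) (r : ZMod f → ℤ)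
    (hdvd : (b ^ f - 1) ∣ cyclicValue b r 0) :
    ∃ m : ZMod f → ℤ, ∀ i, r i = b * m i - m (i + 1) := by
  have hne : b ^ f - 1 ≠ 0 := sub_ne_zero.mpr hb
  have hdvd_all : ∀ i, (b ^ f - 1) ∣ cyclicValue b r i := by
    refine ZMod.forall_of_add_one 0 hdvd fun i hi => ?_
    rw [show cyclicValue b r (i + 1) = b * cyclicValue b r i - (b ^ f - 1) * r i by
      linear_combination -mul_cyclicValue_sub_cyclicValue_add_one b r i]
    exact (hi.mul_left b).sub (dvd_mul_right _ _)
  refine ⟨fun i => cyclicValue b r i / (b ^ f - 1), fun i => mul_left_cancel₀ hne ?_⟩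
  rw [mul_sub, ← mul_assoc, mul_comm _ b, mul_assoc, Int.mul_ediv_cancel' (hdvd_all i),
    Int.mul_ediv_cancel' (hdvd_all (i + 1)), mul_cyclicValue_sub_cyclicValue_add_one]

theorem sub_one_mul_abs_le_of_abs_mul_sub_le {ι α : Type*} [Fintype ι] [Nonempty ι]
    [CommRing α] [LinearOrder α] [IsStrictOrderedRing α] (σ : ι → ι) {b B : α} (hb : 1 ≤ b)
    (m : ι → α) (h : ∀ i, |b * m i - m (σ i)| ≤ B) (i : ι) : (b - 1) * |m i| ≤ B := by
  obtain ⟨k, -, hk⟩ := Finset.exists_max_image Finset.univ (fun i => |m i|) Finset.univ_nonempty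
  have hmax : b * |m k| ≤ B + |m k| :=
    calc b * |m k| = |b * m k - m (σ k) + m (σ k)| := by
            rw [sub_add_cancel, abs_mul, abs_of_nonneg (zero_le_one.trans hb)]
      _ ≤ B + |m k| := (abs_add_le _ _).trans (add_le_add (h k) (hk _ (Finset.mem_univ _)))
  calc (b - 1) * |m i| ≤ (b - 1) * |m k| :=
        mul_le_mul_of_nonneg_left (hk i (Finset.mem_univ _)) (sub_nonneg.mpr hb)
    _ = b * |m k| - |m k| := by ring
    _ ≤ B := by linarith

section Runs

variable {f : ℕ}

theorem mem_coverSet [NeZero f] {i x : ZMod f} {j : ℕ} :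
    x ∈ coverSet f i j ↔ ∃ t ≤ j, i + t = x := by
  simp [coverSet]

theorem card_coverSet [NeZero f] {i : ZMod f} {j : ℕ} (hj : j < f) :
    (coverSet f i j).card = j + 1 := by
  rw [coverSet, Finset.card_image_of_injOn, Finset.card_range]
  intro t ht u hu htu
  simp only [Finset.coe_range, Set.mem_Iio] at ht hu
  have h := congrArg ZMod.val (add_left_cancel htu)
  rwa [ZMod.val_cast_of_lt (by omega), ZMod.val_cast_of_lt (by omega)] at h

variable {M : Type*} [Zero M] (m : ZMod f → M)

/-- The least `k` with `m (a + k + 1) = 0` (`0` if there is none). -/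
noncomputable def runLength (a : ZMod f) : ℕ := sInf {k : ℕ | m (a + (k + 1 : ℕ)) = 0}

variable {m} {a : ZMod f}

theorem sub_one_mem_runLength_set [NeZero f] (ha : m a = 0) :
    f - 1 ∈ {k : ℕ | m (a + (k + 1 : ℕ)) = 0} := by
  show m (a + (f - 1 + 1 : ℕ)) = 0
  rwa [Nat.sub_add_cancel NeZero.one_le, ZMod.natCast_self, add_zero]

theorem apply_add_runLength_add_one [NeZero f] (ha : m a = 0) :
    m (a + (runLength m a + 1 : ℕ)) = 0 :=
  Nat.sInf_mem ⟨_, sub_one_mem_runLength_set ha⟩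

theorem runLength_lt [NeZero f] (ha : m a = 0) : runLength m a < f :=
  (Nat.sInf_le (sub_one_mem_runLength_set ha)).trans_lt (Nat.sub_one_lt (NeZero.ne f))

theorem one_le_runLength [NeZero f] (ha : m a = 0) (ha1 : m (a + 1) ≠ 0) : 1 ≤ runLength m a := by
  by_contra! h
  exact ha1 (by simpa [Nat.lt_one_iff.mp h] using apply_add_runLength_add_one ha)

theorem apply_add_ne_zero_of_le_runLength {t : ℕ} (ht1 : 1 ≤ t) (ht : t ≤ runLength m a) :
    m (a + t) ≠ 0 := by
  have h : ¬ m (a + (t - 1 + 1 : ℕ)) = 0 :=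
    Nat.notMem_of_lt_sInf (show t - 1 < runLength m a by omega)
  rwa [Nat.sub_add_cancel ht1] at h

theorem apply_add_eq_of_le_runLength (hstep : ∀ i, m i ≠ 0 → m (i + 1) = 0 ∨ m (i + 1) = m i)
    {t : ℕ} (ht1 : 1 ≤ t) (ht : t ≤ runLength m a) : m (a + t) = m (a + 1) := by
  induction t, ht1 using Nat.le_induction with
  | base => simp
  | succ t ht1 ih =>
    have hne : m (a + t) ≠ 0 := apply_add_ne_zero_of_le_runLength ht1 (by omega)
    have hne' : m (a + t + 1) ≠ 0 := by
      simpa [add_assoc] using apply_add_ne_zero_of_le_runLength (a := a) (by omega) ht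
    rw [Nat.cast_succ, ← add_assoc, ← ih (by omega)]
    exact (hstep _ hne).resolve_left hne'

theorem eq_of_add_eq_add_of_le_runLength {b : ZMod f} (ha : m a = 0) {t u : ℕ}
    (hu : u ≤ runLength m b) (htu : t ≤ u) (hab : a + t = b + u) : a = b := by
  have hsub : a = b + (u - t : ℕ) := by
    rw [Nat.cast_sub htu]
    linear_combination hab
  rcases Nat.eq_zero_or_pos (u - t) with h | h
  · simpa [h] using hsub
  · exact absurd (hsub ▸ ha) (apply_add_ne_zero_of_le_runLength h (by omega))

theorem eq_of_mem_coverSet_runLength [NeZero f] {b x : ZMod f} (ha : m a = 0) (hb : m b = 0)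
    (hxa : x ∈ coverSet f a (runLength m a)) (hxb : x ∈ coverSet f b (runLength m b)) :
    a = b := by
  obtain ⟨t, ht, rfl⟩ := mem_coverSet.1 hxa
  obtain ⟨u, hu, hab⟩ := mem_coverSet.1 hxb
  rcases le_total t u with htu | hut
  · exact eq_of_add_eq_add_of_le_runLength ha hu htu hab.symm
  · exact (eq_of_add_eq_add_of_le_runLength hb ht hut hab).symm

theorem exists_mem_coverSet_runLength [NeZero f] {z : ZMod f} (hz : m z = 0) {x : ZMod f}
    (hx : m x ≠ 0) : ∃ a, m a = 0 ∧ m (a + 1) ≠ 0 ∧ x ∈ coverSet f a (runLength m a) := by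
  refine ZMod.forall_of_add_one
    (P := fun x => m x ≠ 0 → ∃ a, m a = 0 ∧ m (a + 1) ≠ 0 ∧ x ∈ coverSet f a (runLength m a))
    z (fun h => (h hz).elim) (fun i ih hi1 => ?_) x hx
  by_cases hi : m i = 0
  · exact ⟨i, hi, hi1, mem_coverSet.2 ⟨1, one_le_runLength hi hi1, by simp⟩⟩
  obtain ⟨a, ha, ha1, hia⟩ := ih hi
  obtain ⟨t, ht, rfl⟩ := mem_coverSet.1 hia
  have hlt : t < runLength m a := by
    refine lt_of_le_of_ne ht fun heq => hi1 ?_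
    simpa [heq, add_assoc] using apply_add_runLength_add_one ha
  exact ⟨a, ha, ha1, mem_coverSet.2 ⟨t + 1, hlt, by push_cast; ring⟩⟩

end Runs

section Strings

variable {p f : ℕ} {r m : ZMod f → ℤ}

theorem carry_step (hr : ∀ i, |r i| ≤ (p : ℤ)) (hm : ∀ i, r i = p * m i - m (i + 1))
    (hm1 : ∀ i, |m i| ≤ 1) (i : ZMod f) (hi : m i ≠ 0) : m (i + 1) = 0 ∨ m (i + 1) = m i := by
  have hri := hm i ▸ abs_le.mp (hr i)
  have hmi := abs_le.mp (hm1 i)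
  have hmi1 := abs_le.mp (hm1 (i + 1))
  obtain h | h : m i = 1 ∨ m i = -1 := by omega
  all_goals rw [h] at hri ⊢; omega

theorem isPMString_runLength [NeZero f] (hr : ∀ i, |r i| ≤ (p : ℤ))
    (hm : ∀ i, r i = p * m i - m (i + 1)) (hm1 : ∀ i, |m i| ≤ 1) {a : ZMod f} (ha : m a = 0)
    (ha1 : m (a + 1) ≠ 0) :
    IsPMString p f r a (runLength m a) (m (a + 1)) := by
  have hrun {t : ℕ} (ht1 : 1 ≤ t) (ht : t ≤ runLength m a) : m (a + t) = m (a + 1) :=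
    apply_add_eq_of_le_runLength (carry_step hr hm hm1) ht1 ht
  have hend : m (a + runLength m a + 1) = 0 := by
    simpa [add_assoc] using apply_add_runLength_add_one ha
  refine ⟨?_, one_le_runLength ha ha1, by rw [hm, ha]; ring, fun t ht1 ht => ?_, ?_,
    card_coverSet (runLength_lt ha)⟩
  · have := abs_le.mp (hm1 (a + 1))
    omega
  · have hnext : m (a + t + 1) = m (a + 1) := by
      simpa [add_assoc] using hrun (t := t + 1) (by omega) ht
    rw [hm, hrun ht1 ht.le, hnext]
    ring
  · rw [hm, hrun (one_le_runLength ha ha1) le_rfl, hend]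
    ring

theorem exists_pmString_decomposition [NeZero f] (hr : ∀ i, |r i| ≤ (p : ℤ))
    (hm : ∀ i, r i = p * m i - m (i + 1)) (hm1 : ∀ i, |m i| ≤ 1) {z : ZMod f} (hz : m z = 0) :
    ∃ T : Finset (ZMod f × ℕ × ℤ),
      (∀ s ∈ T, IsPMString p f r s.1 s.2.1 s.2.2) ∧
      (∀ s ∈ T, ∀ s' ∈ T, s ≠ s' →
        Disjoint (coverSet f s.1 s.2.1) (coverSet f s'.1 s'.2.1)) ∧
      (∀ i : ZMod f, (∀ s ∈ T, i ∉ coverSet f s.1 s.2.1) → r i = 0) := by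
  classical
  refine ⟨(Finset.univ.filter fun a => m a = 0 ∧ m (a + 1) ≠ 0).image
    fun a => (a, runLength m a, m (a + 1)), ?_, ?_, ?_⟩
  · simp only [Finset.mem_image, Finset.mem_filter, Finset.mem_univ, true_and]
    rintro _ ⟨a, ⟨ha, ha1⟩, rfl⟩
    exact isPMString_runLength hr hm hm1 ha ha1
  · simp only [Finset.mem_image, Finset.mem_filter, Finset.mem_univ, true_and]
    rintro _ ⟨a, ⟨ha, -⟩, rfl⟩ _ ⟨b, ⟨hb, -⟩, rfl⟩ hab
    refine Finset.disjoint_left.2 fun x hxa hxb => hab ?_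
    rw [eq_of_mem_coverSet_runLength ha hb hxa hxb]
  · intro i hi
    simp only [Finset.mem_image, Finset.mem_filter, Finset.mem_univ, true_and,
      forall_exists_index, and_imp] at hi
    have hi0 : m i = 0 := by
      by_contra h
      obtain ⟨a, ha, ha1, hia⟩ := exists_mem_coverSet_runLength hz h
      exact hi _ a ha ha1 rfl hia
    have hi1 : m (i + 1) = 0 := by
      by_contra h
      exact hi _ i hi0 h rfl (mem_coverSet.2 ⟨0, Nat.zero_le _, by simp⟩)
    rw [hm, hi0, hi1]
    ring

theorem apply_eq_of_abs_eq_two [NeZero f] (hr : ∀ i, |r i| ≤ 2)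
    (hm : ∀ i, r i = 2 * m i - m (i + 1)) (hm2 : ∀ i, |m i| ≤ 2) {a : ZMod f} (ha : |m a| = 2)
    (i : ZMod f) : m i = m a := by
  refine ZMod.forall_of_add_one (P := fun j => m j = m a) a rfl (fun j hj => ?_) i
  have hrj := hm j ▸ abs_le.mp (hr j)
  have hmj := abs_le.mp (hm2 (j + 1))
  rcases abs_eq zero_le_two |>.mp ha with h | h <;> rw [hj, h] at hrj <;> omega

theorem forall_eq_two_or_forall_eq_neg_two [NeZero f] (hr : ∀ i, |r i| ≤ 2)
    (hm : ∀ i, r i = 2 * m i - m (i + 1)) (hm2 : ∀ i, |m i| ≤ 2) {a : ZMod f} (ha : |m a| = 2) :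
    (∀ i, r i = 2) ∨ (∀ i, r i = -2) := by
  have hconst := apply_eq_of_abs_eq_two hr hm hm2 ha
  rcases abs_eq zero_le_two |>.mp ha with h | h
  · exact Or.inl fun i => by rw [hm, hconst i, hconst (i + 1), h]; norm_num
  · exact Or.inr fun i => by rw [hm, hconst i, hconst (i + 1), h]; norm_num

theorem forall_eq_sub_one_or_forall_eq_neg [NeZero f] (hr : ∀ i, |r i| ≤ (p : ℤ))
    (hm : ∀ i, r i = p * m i - m (i + 1)) (hm1 : ∀ i, |m i| ≤ 1) (hz : ∀ i, m i ≠ 0) :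
    (∀ i, r i = (p : ℤ) - 1) ∨ (∀ i, r i = -((p : ℤ) - 1)) := by
  have hconst : ∀ i, m i = m 0 := ZMod.forall_of_add_one 0 rfl fun i hi =>
    ((carry_step hr hm hm1 i (hz i)).resolve_left (hz _)).trans hi
  have h0 := abs_le.mp (hm1 0)
  obtain h | h : m 0 = 1 ∨ m 0 = -1 := by have := hz 0; omega
  · exact Or.inl fun i => by rw [hm, hconst i, hconst (i + 1), h]; ring
  · exact Or.inr fun i => by rw [hm, hconst i, hconst (i + 1), h]; ring

end Strings

theorem stmt0 (p f : ℕ) (hp : p.Prime) [NeZero f]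
    (r : ZMod f → ℤ) (hr : ∀ i, |r i| ≤ (p : ℤ))
    (hcong : ((p : ℤ) ^ f - 1) ∣
      ∑ i : Fin f, (p : ℤ) ^ (f - 1 - i.val) * r ((i.val : ZMod f))) :
    ((∀ i, r i = (p : ℤ) - 1) ∨ (∀ i, r i = -((p : ℤ) - 1))) ∨
    (∃ T : Finset (ZMod f × ℕ × ℤ),
      (∀ s ∈ T, IsPMString p f r s.1 s.2.1 s.2.2) ∧
      (∀ s ∈ T, ∀ s' ∈ T, s ≠ s' →
        Disjoint (coverSet f s.1 s.2.1) (coverSet f s'.1 s'.2.1)) ∧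
      (∀ i : ZMod f, (∀ s ∈ T, i ∉ coverSet f s.1 s.2.1) → r i = 0)) ∨
    (p = 2 ∧ ((∀ i, r i = 2) ∨ (∀ i, r i = -2))) := by
  have hp2 : (2 : ℤ) ≤ p := by exact_mod_cast hp.two_le
  obtain ⟨m, hm⟩ :=
    exists_carries_of_dvd (one_lt_pow₀ (a := (p : ℤ)) (by omega) (NeZero.ne f)).ne' r
    (by simpa [cyclicValue, Fin.sum_univ_eq_sum_range (fun t => (p : ℤ) ^ (f - 1 - t) * r t)]
      using hcong)
  have hbd : ∀ i, ((p : ℤ) - 1) * |m i| ≤ p :=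
    sub_one_mul_abs_le_of_abs_mul_sub_le (· + 1) (by omega) m fun i => hm i ▸ hr i
  by_cases hbig : ∃ a, 1 < |m a|
  · obtain ⟨a, ha⟩ := hbig
    obtain rfl : p = 2 := by have := hbd a; zify; nlinarith
    push_cast at hm hr hbd
    have hm2 : ∀ i, |m i| ≤ 2 := fun i => by simpa using hbd i
    have ha2 : |m a| = 2 := le_antisymm (hm2 a) ha
    exact Or.inr (Or.inr ⟨rfl, forall_eq_two_or_forall_eq_neg_two hr hm hm2 ha2⟩)
  push Not at hbig
  by_cases hz : ∃ z, m z = 0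
  · exact Or.inr (Or.inl (exists_pmString_decomposition hr hm hbig hz.choose_spec))
  push Not at hz
  exact Or.inl (forall_eq_sub_one_or_forall_eq_neg hr hm hbig hz)
end

section
/- Let p be a prime and f ≥ 1. Let r_0,…,r_{f-1} be integers with 1 ≤ r_i ≤ p, let J ⊆ {0,…,f−1}, and set h_i = r_i if i ∈ J and h_i = 0 otherwise. Then ∑_{i=0}^{f-1} p^{f-1-i} h_i ≡ ∑_{i=0}^{f-1} p^{f-1-i} (r_i − h_i) (mod p^f − 1) holds if and only if one of the following holds: (a) every r_i lies in {1, p−1, p}, the tuple satisfies the 𝒫-conditions (if r_i = p then r_{i+1} = 1; if r_i ∈ {1, p−1} then r_{i+1} ∈ {p−1, p}, indices mod f), and J satisfies: if (r_{i−1}, r_i) = (p,1) then (i+1 ∈ J ⟺ i ∉ J), and if (r_{i−1}, r_i) = (1, p−1) or (p−1, p−1) then (i+1 ∈ J ⟺ i ∈ J); or (b) p = 2, (r_0,…,r_{f-1}) = (2,…,2), and J = ∅ or J = {0,…,f−1}. -/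
/-!
With the signed digits `b i = ±r i` (sign `+` exactly on `J`), `p ^ f - 1` divides
`∑ p ^ (f - 1 - i) * b i` iff `b` admits cyclic integer carries: `b i = p * t (i - 1) - t i`
with indices mod `f`. The sum then telescopes to `(p ^ f - 1) * t (-1)`; conversely Horner's scheme
started from the quotient produces the carries. At a carry of maximal size, `|b i| ≤ p` gives
`(p - 1) * |t i| ≤ p`, so all carries lie in `{-1, 0, 1}` unless `p = 2`, where a carry `±2`
propagates around the cycle and makes all `b i` equal to it. Carries in `{-1, 0, 1}` allow only a
few local patterns: `t i = 0` iff `r i = p`; after a zero carry the digit is `1` with sign `-t i`;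
after a nonzero carry the digit has the sign of that carry and is `p`, or `p - 1` with the carry
repeated. These patterns are the conditions of case (a), and under them the carries are
`t i = 0` if `r i = p` and otherwise `t i = ±1`, with `+` iff `i + 1 ∈ J`.
-/

open Finset

section Carry

variable {R : Type*} [CommRing R] {f : ℕ}

def hornerSum (p : R) (b : ZMod f → R) (k : ℕ) : R :=
  ∑ i ∈ range k, p ^ (k - 1 - i) * b i

def IsCarry (p : R) (b t : ZMod f → R) : Prop :=
  ∀ i, b i = p * t (i - 1) - t i

variable {p : R} {b t : ZMod f → R}

lemma hornerSum_succ (k : ℕ) : hornerSum p b (k + 1) = p * hornerSum p b k + b k := by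
  rw [hornerSum, sum_range_succ, hornerSum, mul_sum, Nat.add_sub_cancel, Nat.sub_self, pow_zero,
    one_mul]
  congr 1
  refine sum_congr rfl fun i hi => ?_
  rw [← mul_assoc, ← pow_succ']
  congr 2
  have := mem_range.1 hi
  omega

lemma IsCarry.hornerSum_eq (ht : IsCarry p b t) (k : ℕ) :
    hornerSum p b k = p ^ k * t (-1) - t (k - 1) := by
  induction k with
  | zero => simp [hornerSum]
  | succ k ih =>
    rw [hornerSum_succ, ih, ht k, Nat.cast_succ, add_sub_cancel_right]
    ring

lemma dvd_hornerSum_iff_exists_isCarry [NeZero f] :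
    p ^ f - 1 ∣ hornerSum p b f ↔ ∃ t, IsCarry p b t := by
  constructor
  · rintro ⟨m, hm⟩
    -- `T k` is the carry left after the first `k` digits when starting from the quotient `m`.
    set T : ℕ → R := fun k => p ^ k * m - hornerSum p b k with hT
    have hT_succ (k : ℕ) : T (k + 1) = p * T k - b k := by
      simp only [hT, hornerSum_succ, pow_succ]
      ring
    have hT_periodic : Function.Periodic T f := by
      intro k
      induction k with
      | zero =>
        show p ^ (0 + f) * m - hornerSum p b (0 + f) = p ^ 0 * m - hornerSum p b 0
        rw [zero_add, hm]
        simp [hornerSum]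
        ring
      | succ k ih =>
        rw [add_right_comm, hT_succ, hT_succ, ih, Nat.cast_add, ZMod.natCast_self, add_zero]
    refine ⟨fun i => T (i.val + 1), fun i => ?_⟩
    have hprev : T ((i - 1).val + 1) = T i.val := by
      have hmod : ((i - 1).val + 1) % f = i.val % f :=
        (ZMod.natCast_eq_natCast_iff' _ _ _).1 (by simp)
      rw [← hT_periodic.map_mod_nat, hmod, hT_periodic.map_mod_nat]
    simp only [hprev, hT_succ, ZMod.natCast_zmod_val]
    ring
  · rintro ⟨t, ht⟩
    exact ⟨t (-1), by rw [ht.hornerSum_eq, ZMod.natCast_self, zero_sub]; ring⟩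

end Carry

lemma IsCarry.sub_one_mul_abs_le {R : Type*} [CommRing R] [LinearOrder R] [IsStrictOrderedRing R]
    {f : ℕ} [NeZero f] {p : R} {b t : ZMod f → R} (ht : IsCarry p b t) (hp : 1 ≤ p)
    (hb : ∀ i, |b i| ≤ p) (i : ZMod f) : (p - 1) * |t i| ≤ p := by
  obtain ⟨j, hj⟩ := Finite.exists_max fun i => |t i|
  have hpj : p * |t j| ≤ p + |t j| := by
    calc p * |t j| = |b (j + 1) + t (j + 1)| := by
          rw [ht (j + 1), add_sub_cancel_right, sub_add_cancel, abs_mul,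
            abs_of_nonneg (show (0 : R) ≤ p by linarith)]
      _ ≤ |b (j + 1)| + |t (j + 1)| := abs_add_le _ _
      _ ≤ p + |t j| := add_le_add (hb _) (hj _)
  calc (p - 1) * |t i| ≤ (p - 1) * |t j| := mul_le_mul_of_nonneg_left (hj i) (by linarith)
    _ ≤ p := by linarith

lemma IsCarry.eq_of_abs_eq_two {f : ℕ} [NeZero f] {b t : ZMod f → ℤ} (ht : IsCarry 2 b t)
    (hb : ∀ i, |b i| ≤ 2) (ht2 : ∀ i, |t i| ≤ 2) {j : ZMod f} (hj : |t j| = 2) (i : ZMod f) :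
    t i = t j := by
  have hj' := abs_eq_abs.1 (hj.trans (abs_two (α := ℤ)).symm)
  have hstep (k : ℕ) : t (j + k) = t j := by
    induction k with
    | zero => simp
    | succ k ih =>
      have e := ht (j + k + 1)
      rw [add_sub_cancel_right, ih] at e
      have := abs_le.1 (hb (j + k + 1))
      have := abs_le.1 (ht2 (j + k + 1))
      rw [Nat.cast_succ, ← add_assoc]
      omega
  simpa using hstep (i - j).val

lemma mul_cases_of_abs_le_one {x : ℤ} (hx : |x| ≤ 1) (p : ℤ) :
    (x = -1 ∧ p * x = -p) ∨ (x = 0 ∧ p * x = 0) ∨ (x = 1 ∧ p * x = p) := by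
  obtain h | h | h : x = -1 ∨ x = 0 ∨ x = 1 := by have := abs_le.1 hx; omega
  all_goals simp [h]

section SignedDigits

variable {f p : ℕ} {r : ZMod f → ℕ} {J : Finset (ZMod f)} {t : ZMod f → ℤ}

/-- The difference `h i - (r i - h i)` of the two sides of the congruence. -/
def signedDigit (r : ZMod f → ℕ) (J : Finset (ZMod f)) (i : ZMod f) : ℤ :=
  if i ∈ J then r i else -r i

def IsAdmissible (p : ℕ) (r : ZMod f → ℕ) (J : Finset (ZMod f)) : Prop :=
  (∀ i : ZMod f, r i = 1 ∨ r i = p - 1 ∨ r i = p) ∧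
    (∀ i : ZMod f, r i = p → r (i + 1) = 1) ∧
    (∀ i : ZMod f, (r i = 1 ∨ r i = p - 1) → (r (i + 1) = p - 1 ∨ r (i + 1) = p)) ∧
    (∀ i : ZMod f, (r (i - 1) = p ∧ r i = 1) → ((i + 1) ∈ J ↔ i ∉ J)) ∧
    (∀ i : ZMod f, ((r (i - 1) = 1 ∧ r i = p - 1) ∨ (r (i - 1) = p - 1 ∧ r i = p - 1)) →
      ((i + 1) ∈ J ↔ i ∈ J))

def IsExceptional [NeZero f] (p : ℕ) (r : ZMod f → ℕ) (J : Finset (ZMod f)) : Prop :=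
  p = 2 ∧ (∀ i, r i = 2) ∧ (J = ∅ ∨ J = univ)

lemma sum_sub_sum_eq_hornerSum {h : ZMod f → ℕ} (hh : ∀ i, h i = if i ∈ J then r i else 0) :
    (∑ i : Fin f, (p : ℤ) ^ (f - 1 - i.val) * (h (i.val : ZMod f) : ℤ)) -
        ∑ i : Fin f, (p : ℤ) ^ (f - 1 - i.val) *
          ((r (i.val : ZMod f) : ℤ) - (h (i.val : ZMod f) : ℤ)) =
      hornerSum (p : ℤ) (signedDigit r J) f := by
  rw [← sum_sub_distrib, hornerSum, ← Fin.sum_univ_eq_sum_range]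
  refine sum_congr rfl fun i _ => ?_
  rw [hh, signedDigit]
  split_ifs <;> push_cast <;> ring

lemma abs_signedDigit (i : ZMod f) : |signedDigit r J i| = r i := by
  unfold signedDigit
  split_ifs <;> simp

lemma signedDigit_pos_iff (hr : ∀ i, 1 ≤ r i) (i : ZMod f) : 0 < signedDigit r J i ↔ i ∈ J := by
  have := hr i
  unfold signedDigit
  split_ifs with hi <;> simp only [hi, iff_true, iff_false] <;> omega

lemma isExceptional_of_one_lt_abs_carry [NeZero f] (hp : 2 ≤ p) (hr1 : ∀ i, 1 ≤ r i)
    (hr2 : ∀ i, r i ≤ p) (ht : IsCarry (p : ℤ) (signedDigit r J) t) {j : ZMod f}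
    (hj : 1 < |t j|) : IsExceptional p r J := by
  have hb (i : ZMod f) : |signedDigit r J i| ≤ p := by
    rw [abs_signedDigit]
    exact_mod_cast hr2 i
  have hbound := ht.sub_one_mul_abs_le (by exact_mod_cast (by omega : 1 ≤ p)) hb
  obtain rfl : p = 2 := by
    have := hbound j
    have : (p : ℤ) ≤ 2 := by nlinarith
    omega
  have ht2 (i : ZMod f) : |t i| ≤ 2 := by
    have := hbound i
    push_cast at this
    linarith
  have htj : |t j| = 2 := le_antisymm (ht2 j) hj
  have hconst := ht.eq_of_abs_eq_two (by exact_mod_cast hb) ht2 htj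
  have hdigit (i : ZMod f) : signedDigit r J i = t j := by
    rw [ht i, hconst (i - 1), hconst i]
    push_cast
    ring
  refine ⟨rfl, fun i => ?_, ?_⟩
  · have := abs_signedDigit (r := r) (J := J) i
    rw [hdigit, htj] at this
    omega
  · rcases abs_eq (by norm_num) |>.1 htj with h | h
    · exact Or.inr <| eq_univ_of_forall fun i =>
        (signedDigit_pos_iff hr1 i).1 (by rw [hdigit, h]; norm_num)
    · refine Or.inl <| eq_empty_of_forall_notMem fun i hi => ?_
      have := (signedDigit_pos_iff hr1 i).2 hi
      rw [hdigit, h] at this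
      norm_num at this

lemma isCarry_of_isAdmissible (hp : 2 ≤ p) (had : IsAdmissible p r J) :
    IsCarry (p : ℤ) (signedDigit r J)
      fun i => if r i = p then 0 else if i + 1 ∈ J then 1 else -1 := by
  obtain ⟨c1, c2, c3, c4, c5⟩ := had
  intro i
  have hsub := sub_add_cancel i 1
  simp only [hsub, signedDigit]
  by_cases hri : r i = p
  · have hprev : r (i - 1) ≠ p := fun h => by have := c2 _ h; rw [hsub] at this; omega
    simp only [hri, hprev, if_true, if_false]
    split_ifs <;> ring
  · by_cases hprev : r (i - 1) = p
    · have h1 : r i = 1 := by simpa [hsub] using c2 _ hprev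
      have hJ := c4 i ⟨hprev, h1⟩
      have hp1 : 1 ≠ p := by omega
      by_cases hi : i ∈ J <;> simp [hi, hprev, h1, hJ, hp1]
    · have h1 : r i = p - 1 := by
        have := c3 (i - 1) (by have := c1 (i - 1); omega)
        rw [hsub] at this
        omega
      have hJ := c5 i (by have := c1 (i - 1); omega)
      by_cases hi : i ∈ J <;> simp [hi, hprev, h1, hJ] <;> omega

variable (hp : 2 ≤ p) (hr1 : ∀ i, 1 ≤ r i) (hr2 : ∀ i, r i ≤ p)
  (ht : IsCarry (p : ℤ) (signedDigit r J) t) (ht1 : ∀ i, |t i| ≤ 1)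
include hr1 hr2 ht ht1

include hp in
lemma carry_eq_zero_iff (i : ZMod f) : t i = 0 ↔ r i = p := by
  have e := ht i
  have := hr1 i; have := hr2 i; have := abs_le.1 (ht1 i)
  have := mul_cases_of_abs_le_one (ht1 (i - 1)) p
  unfold signedDigit at e
  split_ifs at e <;> omega

lemma digit_eq_one_of_carry_eq_zero {i : ZMod f} (h : t (i - 1) = 0) :
    r i = 1 ∧ (i ∈ J ↔ t i = -1) := by
  have e := ht i
  have := hr1 i; have := hr2 i; have := abs_le.1 (ht1 i)
  rw [h, mul_zero] at e
  unfold signedDigit at e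
  split_ifs at e with hi <;> simp only [hi, true_iff, false_iff] <;> omega

lemma mem_iff_of_carry_ne_zero {i : ZMod f} (h : t (i - 1) ≠ 0) : i ∈ J ↔ t (i - 1) = 1 := by
  have e := ht i
  have := hr1 i; have := hr2 i; have := abs_le.1 (ht1 i)
  have := mul_cases_of_abs_le_one (ht1 (i - 1)) p
  unfold signedDigit at e
  split_ifs at e with hi <;> simp only [hi, true_iff, false_iff] <;> omega

lemma carry_eq_of_ne_zero {i : ZMod f} (h : t (i - 1) ≠ 0) (hi : r i ≠ p) :
    t i = t (i - 1) ∧ r i = p - 1 := by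
  have e := ht i
  have := hr1 i; have := hr2 i; have := abs_le.1 (ht1 i)
  have := mul_cases_of_abs_le_one (ht1 (i - 1)) p
  unfold signedDigit at e
  split_ifs at e <;> omega

include hp in
lemma isAdmissible_of_isCarry : IsAdmissible p r J := by
  have hzero := carry_eq_zero_iff hp hr1 hr2 ht ht1
  have hnext (i : ZMod f) : t (i + 1 - 1) = t i := by rw [add_sub_cancel_right]
  refine ⟨fun i => ?_, fun i hi => ?_, fun i hi => ?_, fun i ⟨hprev, hi⟩ => ?_, fun i hi => ?_⟩
  · by_cases h0 : t (i - 1) = 0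
    · exact Or.inl (digit_eq_one_of_carry_eq_zero hr1 hr2 ht ht1 h0).1
    · by_cases hpi : r i = p
      · exact Or.inr (Or.inr hpi)
      · exact Or.inr (Or.inl (carry_eq_of_ne_zero hr1 hr2 ht ht1 h0 hpi).2)
  · have h0 : t (i + 1 - 1) = 0 := by rw [hnext, hzero, hi]
    exact (digit_eq_one_of_carry_eq_zero hr1 hr2 ht ht1 h0).1
  · have h0 : t (i + 1 - 1) ≠ 0 := by rw [hnext, ne_eq, hzero]; omega
    by_cases hpi : r (i + 1) = p
    · exact Or.inr hpi
    · exact Or.inl (carry_eq_of_ne_zero hr1 hr2 ht ht1 h0 hpi).2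
  · obtain ⟨-, hmem⟩ := digit_eq_one_of_carry_eq_zero hr1 hr2 ht ht1 ((hzero _).2 hprev)
    have h0 : t i ≠ 0 := by rw [ne_eq, hzero]; omega
    rw [mem_iff_of_carry_ne_zero hr1 hr2 ht ht1 (by rwa [hnext]), hnext, hmem]
    have := abs_le.1 (ht1 i)
    omega
  · have hprev : t (i - 1) ≠ 0 := by rw [ne_eq, hzero]; omega
    have hi' : t i ≠ 0 := by rw [ne_eq, hzero]; omega
    obtain ⟨heq, -⟩ := carry_eq_of_ne_zero hr1 hr2 ht ht1 hprev (by omega)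
    rw [mem_iff_of_carry_ne_zero hr1 hr2 ht ht1 (by rwa [hnext]), hnext,
      mem_iff_of_carry_ne_zero hr1 hr2 ht ht1 hprev, heq]

end SignedDigits

theorem stmt1 (p f : ℕ) (hp : p.Prime) [NeZero f]
    (r : ZMod f → ℕ) (hr1 : ∀ i, 1 ≤ r i) (hr2 : ∀ i, r i ≤ p)
    (J : Finset (ZMod f))
    (h : ZMod f → ℕ) (hh : ∀ i, h i = if i ∈ J then r i else 0) :
    (((p : ℤ) ^ f - 1) ∣
        ((∑ i : Fin f, (p : ℤ) ^ (f - 1 - i.val) * (h ((i.val : ZMod f)) : ℤ)) -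
          ∑ i : Fin f, (p : ℤ) ^ (f - 1 - i.val) *
            ((r ((i.val : ZMod f)) : ℤ) - (h ((i.val : ZMod f)) : ℤ)))) ↔
    (((∀ i : ZMod f, r i = 1 ∨ r i = p - 1 ∨ r i = p) ∧
      (∀ i : ZMod f, r i = p → r (i + 1) = 1) ∧
      (∀ i : ZMod f, (r i = 1 ∨ r i = p - 1) → (r (i + 1) = p - 1 ∨ r (i + 1) = p)) ∧
      (∀ i : ZMod f, (r (i - 1) = p ∧ r i = 1) → ((i + 1) ∈ J ↔ i ∉ J)) ∧
      (∀ i : ZMod f, ((r (i - 1) = 1 ∧ r i = p - 1) ∨ (r (i - 1) = p - 1 ∧ r i = p - 1)) →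
        ((i + 1) ∈ J ↔ i ∈ J))) ∨
     (p = 2 ∧ (∀ i, r i = 2) ∧ (J = ∅ ∨ J = Finset.univ))) := by
  show _ ↔ IsAdmissible p r J ∨ IsExceptional p r J
  rw [sum_sub_sum_eq_hornerSum hh, dvd_hornerSum_iff_exists_isCarry]
  constructor
  · rintro ⟨t, ht⟩
    by_cases ht1 : ∀ i, |t i| ≤ 1
    · exact Or.inl (isAdmissible_of_isCarry hp.two_le hr1 hr2 ht ht1)
    · obtain ⟨j, hj⟩ := not_forall.1 ht1
      exact Or.inr (isExceptional_of_one_lt_abs_carry hp.two_le hr1 hr2 ht (not_le.1 hj))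
  · rintro (had | ⟨rfl, hr, rfl | rfl⟩)
    · exact ⟨_, isCarry_of_isAdmissible hp.two_le had⟩
    · exact ⟨fun _ => -2, fun i => by simp [signedDigit, hr]⟩
    · exact ⟨fun _ => 2, fun i => by simp [signedDigit, hr]⟩
end

section
/- Let p be an odd prime, let S' be the ℤ_p-submodule of ℚ_p[[u]] consisting of series ∑_{j≥0} b_j u^{pj}/(pj)! with b_j ∈ ℤ_p, and for l ≥ 1 let 𝓘_l = ∑_{m=1}^{l} p^{l−m} u^{pm} S' ⊆ ℚ_p[[u]]. Let N be the derivation with N(u) = −u. Then N(𝓘_l) ⊆ 𝓘_{l+1} for all l ≥ 1. -/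
/-- The set `S'` of power series `∑_{j≥0} b_j u^{pj}/(pj)!` with `b_j ∈ ℤ_p`. -/
def Sprime (p : ℕ) [Fact p.Prime] : Set (PowerSeries ℚ_[p]) :=
  {z | ∃ b : ℕ → ℤ_[p], ∀ n : ℕ,
    PowerSeries.coeff (R := ℚ_[p]) n z =
      if p ∣ n then ((b (n / p) : ℚ_[p]) / (Nat.factorial n : ℚ_[p])) else 0}

/-- The submodule `𝓘_l = ∑_{m=1}^{l} p^{l−m} u^{pm} S'` of `ℚ_p[[u]]`,
described as a set. -/
noncomputable def Ideall (p : ℕ) [Fact p.Prime] (l : ℕ) : Set (PowerSeries ℚ_[p]) :=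
  {y | ∃ z : ℕ → PowerSeries ℚ_[p], (∀ m, z m ∈ Sprime p) ∧
    y = ∑ m ∈ Finset.Icc 1 l,
      PowerSeries.C (R := ℚ_[p]) ((p : ℚ_[p]) ^ (l - m)) * PowerSeries.X ^ (p * m) * z m}

/-- The derivation `N` of `ℚ_p[[u]]` with `N(u) = -u`. -/
noncomputable def Nder (p : ℕ) [Fact p.Prime] (z : PowerSeries ℚ_[p]) : PowerSeries ℚ_[p] :=
  PowerSeries.mk fun n => -(n : ℚ_[p]) * PowerSeries.coeff (R := ℚ_[p]) n z

/-!
The key identity is `N(u^k z) = u^k (-k z + N z)`. For `z ∈ S'` with coefficients `b_j` one has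
`N z ∈ p S'` (as `N` multiplies `u^{pj}` by `-pj`, take `b'_j = -j b_j`), and for `k = p m` also
`-k z ∈ p S'`, so `N(𝓘_l) ⊆ p 𝓘_l`. Finally `p 𝓘_l ⊆ 𝓘_{l+1}`, since `p · p^{l-m} = p^{l+1-m}` for `m ≤ l`.
-/

open PowerSeries

section

variable {p : ℕ} [Fact p.Prime]

lemma zero_mem_Sprime : (0 : ℚ_[p]⟦X⟧) ∈ Sprime p :=
  ⟨0, fun n => by simp⟩

lemma add_mem_Sprime {z w : ℚ_[p]⟦X⟧} (hz : z ∈ Sprime p) (hw : w ∈ Sprime p) :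
    z + w ∈ Sprime p := by
  obtain ⟨b, hb⟩ := hz
  obtain ⟨c, hc⟩ := hw
  refine ⟨b + c, fun n => ?_⟩
  simp only [map_add, hb, hc]
  split_ifs
  · push_cast [Pi.add_apply]; ring
  · simp

lemma C_mul_mem_Sprime (a : ℤ_[p]) {z : ℚ_[p]⟦X⟧} (hz : z ∈ Sprime p) :
    C (a : ℚ_[p]) * z ∈ Sprime p := by
  obtain ⟨b, hb⟩ := hz
  refine ⟨fun j => a * b j, fun n => ?_⟩
  simp only [coeff_C_mul, hb]
  split_ifs
  · push_cast; ring
  · simp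

lemma Nder_sum (s : Finset ℕ) (f : ℕ → ℚ_[p]⟦X⟧) :
    Nder p (∑ m ∈ s, f m) = ∑ m ∈ s, Nder p (f m) := by
  ext n
  simp [Nder, map_sum, Finset.mul_sum]

lemma Nder_C_mul_X_pow_mul (a : ℚ_[p]) (k : ℕ) (z : ℚ_[p]⟦X⟧) :
    Nder p (C a * X ^ k * z) = C a * X ^ k * (C (-(k : ℚ_[p])) * z + Nder p z) := by
  ext n
  simp only [Nder, coeff_mk, mul_assoc, coeff_C_mul, coeff_X_pow_mul', map_add, mul_add]
  split_ifs with h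
  · rw [show (n : ℚ_[p]) = k + ((n - k : ℕ) : ℚ_[p]) by push_cast [Nat.cast_sub h]; ring]
    ring
  · ring

lemma exists_Nder_eq_C_mul_of_mem_Sprime {z : ℚ_[p]⟦X⟧} (hz : z ∈ Sprime p) :
    ∃ w ∈ Sprime p, Nder p z = C (p : ℚ_[p]) * w := by
  obtain ⟨b, hb⟩ := hz
  refine ⟨mk fun n => if p ∣ n then
      (((-(n / p : ℕ) * b (n / p) : ℤ_[p]) : ℚ_[p]) / (n.factorial : ℚ_[p])) else 0,
    ⟨fun j => -(j : ℤ_[p]) * b j, fun n => by simp⟩, ?_⟩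
  ext n
  simp only [Nder, coeff_mk, coeff_C_mul, hb]
  split_ifs with h
  · have hn : ((n / p : ℕ) : ℚ_[p]) * p = n := by rw [← Nat.cast_mul, Nat.div_mul_cancel h]
    push_cast
    rw [← hn]
    ring
  · simp

lemma exists_Nder_C_mul_X_pow_mul_eq_C_mul (a : ℚ_[p]) (m : ℕ) {z : ℚ_[p]⟦X⟧}
    (hz : z ∈ Sprime p) :
    ∃ w ∈ Sprime p, Nder p (C a * X ^ (p * m) * z) = C (p : ℚ_[p]) * (C a * X ^ (p * m) * w) := by
  obtain ⟨z', hz', hNz⟩ := exists_Nder_eq_C_mul_of_mem_Sprime hz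
  refine ⟨C ((-m : ℤ_[p]) : ℚ_[p]) * z + z',
    add_mem_Sprime (C_mul_mem_Sprime _ hz) hz', ?_⟩
  rw [Nder_C_mul_X_pow_mul, hNz]
  push_cast
  simp only [map_neg, map_mul, map_natCast]
  ring

lemma exists_Nder_eq_C_mul_of_mem_Ideall {l : ℕ} {y : ℚ_[p]⟦X⟧} (hy : y ∈ Ideall p l) :
    ∃ y' ∈ Ideall p l, Nder p y = C (p : ℚ_[p]) * y' := by
  obtain ⟨z, hz, rfl⟩ := hy
  choose w hw hNw using fun m =>
    exists_Nder_C_mul_X_pow_mul_eq_C_mul ((p : ℚ_[p]) ^ (l - m)) m (hz m)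
  refine ⟨_, ⟨w, hw, rfl⟩, ?_⟩
  rw [Nder_sum, Finset.mul_sum]
  exact Finset.sum_congr rfl fun m _ => hNw m

lemma C_mul_mem_Ideall_succ {l : ℕ} {y : ℚ_[p]⟦X⟧} (hy : y ∈ Ideall p l) :
    C (p : ℚ_[p]) * y ∈ Ideall p (l + 1) := by
  obtain ⟨z, hz, rfl⟩ := hy
  refine ⟨fun m => if m ≤ l then z m else 0,
    fun m => by dsimp only; split_ifs; exacts [hz m, zero_mem_Sprime], ?_⟩
  rw [Finset.sum_Icc_succ_top (by omega)]
  dsimp only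
  rw [if_neg (by omega), mul_zero, add_zero, Finset.mul_sum]
  refine Finset.sum_congr rfl fun m hm => ?_
  have hml : m ≤ l := (Finset.mem_Icc.mp hm).2
  rw [if_pos hml, Nat.sub_add_comm hml, pow_succ, map_mul]
  ring

end

theorem stmt13_general (p : ℕ) [Fact p.Prime]
    (l : ℕ)
    (y : PowerSeries ℚ_[p]) (hy : y ∈ Ideall p l) :
    Nder p y ∈ Ideall p (l + 1) := by
  obtain ⟨y', hy', hNy⟩ := exists_Nder_eq_C_mul_of_mem_Ideall hy
  exact hNy ▸ C_mul_mem_Ideall_succ hy'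

theorem stmt13 (p : ℕ) [Fact p.Prime] (hodd : p ≠ 2)
    (l : ℕ) (hl : 1 ≤ l)
    (y : PowerSeries ℚ_[p]) (hy : y ∈ Ideall p l) :
    Nder p y ∈ Ideall p (l + 1) :=
  stmt13_general p l y hy
end

section
/- Let p be an odd prime, let π ∈ ℤ_p be a uniformizer (v_p(π)=1), let 1 ≤ l ≤ p, and let y = ∑_{m=1}^{l} p^{l−m} u^{pm} z_m where each z_m = ∑_{j≥0} b_{j,m} u^{pj}/(pj)! with b_{j,m} ∈ ℤ_p. Write y = ∑_{i≥0} a_i (u − π)^i with a_i ∈ ℚ_p. Then a_i ∈ ℤ_p for 0 ≤ i ≤ p; in fact, v_p(a_0) ≥ p + l − 1, v_p(a_i) ≥ p + l − i for 1 ≤ i ≤ p − 1, and v_p(a_p) ≥ l − 1. -/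
theorem stmt14 (p : ℕ) [hp : Fact p.Prime] (hodd : p ≠ 2)
    (π : ℚ_[p]) (hπ : π.valuation = 1)
    (l : ℕ) (hl1 : 1 ≤ l) (hlp : l ≤ p)
    (b : ℕ → ℕ → ℤ_[p])
    (a : ℕ → ℚ_[p])
    (ha : ∀ i ≤ p, a i = ∑ m ∈ Finset.Icc 1 l, ∑' j : ℕ,
      (b j m : ℚ_[p]) * π ^ (p * (j + m) - i) * (p : ℚ_[p]) ^ (l - m) /
        (Nat.factorial (p * j) : ℚ_[p]) * (Nat.choose (p * (j + m)) i : ℚ_[p])) :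
    (∀ i ≤ p, ‖a i‖ ≤ 1) ∧
    ‖a 0‖ ≤ (p : ℝ) ^ (-((p : ℤ) + (l : ℤ) - 1)) ∧
    (∀ i : ℕ, 1 ≤ i → i ≤ p - 1 → ‖a i‖ ≤ (p : ℝ) ^ (-((p : ℤ) + (l : ℤ) - (i : ℤ)))) ∧
    ‖a p‖ ≤ (p : ℝ) ^ (-((l : ℤ) - 1)) := by
  have hp2 : 2 ≤ p := hp.out.two_le
  have hpR : (1:ℝ) < (p:ℝ) := by exact_mod_cast hp.out.one_lt
  have hp0 : (p:ℝ) ≠ 0 := by positivity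
  have hπ0 : π ≠ 0 := by
    intro h; rw [h, Padic.valuation_zero] at hπ; exact one_ne_zero hπ.symm
  have hπn : ‖π‖ = (p:ℝ) ^ (-1 : ℤ) := by
    rw [Padic.norm_eq_zpow_neg_valuation hπ0, hπ]
  -- valuation of factorial bound
  have hV : ∀ j : ℕ, padicValNat p ((p*j).factorial) ≤ p*j := by
    intro j
    have h1 : (p-1) * padicValNat p ((p*j).factorial) ≤ p*j := by
      rw [sub_one_mul_padicValNat_factorial]
      exact Nat.sub_le _ _
    calc padicValNat p ((p*j).factorial)
        ≤ (p-1) * padicValNat p ((p*j).factorial) :=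
          Nat.le_mul_of_pos_left _ (by omega)
      _ ≤ p*j := h1
  -- main bound
  have main : ∀ i t (e : ℤ), i ≤ p → 
      (∀ m j : ℕ, 1 ≤ m → m ≤ l → ‖(Nat.choose (p*(j+m)) i : ℚ_[p])‖ ≤ (p:ℝ)^(-e)) →
      t ≤ ((p:ℤ)-1) + l - i + e →
      ‖a i‖ ≤ (p:ℝ)^(-t) := by
    intro i t e hip hch ht
    rw [ha i hip]
    apply IsUltrametricDist.norm_sum_le_of_forall_le_of_nonneg (by positivity)
    intro m hm
    rw [Finset.mem_Icc] at hm
    apply IsUltrametricDist.norm_tsum_le_of_forall_le_of_nonneg (by positivity)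
    intro j
    have hF0 : ((Nat.factorial (p*j) : ℚ_[p])) ≠ 0 :=
      Nat.cast_ne_zero.mpr (Nat.factorial_ne_zero _)
    have hiA : i ≤ p*(j+m) := le_trans hip (by nlinarith [hm.1])
    rw [norm_mul, norm_div, norm_mul, norm_mul, norm_pow, hπn,
      Padic.norm_p_pow, Padic.norm_eq_zpow_neg_valuation hF0, Padic.valuation_natCast]
    have hb1 : ‖((b j m : ℚ_[p]))‖ ≤ 1 := by
      rw [PadicInt.padic_norm_e_of_padicInt]; exact PadicInt.norm_le_one _
    calc ‖((b j m : ℚ_[p]))‖ * ((p:ℝ)^(-1:ℤ)) ^ (p*(j+m)-i) * (p:ℝ)^(-((l-m : ℕ)):ℤ)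
          / (p:ℝ)^(-(padicValNat p ((p*j).factorial) : ℤ)) * ‖(Nat.choose (p*(j+m)) i : ℚ_[p])‖
        ≤ 1 * ((p:ℝ)^(-1:ℤ)) ^ (p*(j+m)-i) * (p:ℝ)^(-((l-m : ℕ)):ℤ)
          / (p:ℝ)^(-((p*j : ℕ)):ℤ) * ((p:ℝ)^(-e)) := by
          gcongr
          · exact hpR.le
          · exact hV j
          · exact hch m j hm.1 hm.2
      _ = (p:ℝ) ^ ((-1) * ((p*(j+m)-i : ℕ) : ℤ) + (-((l-m : ℕ)):ℤ) - (-((p*j : ℕ)):ℤ) + (-e)) := by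
          rw [one_mul, ← zpow_natCast ((p:ℝ)^(-1:ℤ)), ← zpow_mul, ← zpow_add₀ hp0,
            ← zpow_sub₀ hp0, ← zpow_add₀ hp0]
      _ ≤ (p:ℝ) ^ (-t) := by
          apply zpow_le_zpow_right₀ hpR.le
          have hAc : ((p*(j+m) - i : ℕ) : ℤ) = (p:ℤ)*((j:ℤ)+(m:ℤ)) - i := by
            rw [Nat.cast_sub hiA]; push_cast; ring
          have hBc : ((l - m : ℕ) : ℤ) = (l:ℤ) - m := by
            rw [Nat.cast_sub hm.2]
          rw [hAc, hBc]
          have hm1 : (p:ℤ) - 1 ≤ ((p:ℤ)-1) * m := by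
            have : (1:ℤ) ≤ m := by exact_mod_cast hm.1
            nlinarith [hp.out.two_le]
          push_cast
          nlinarith [hm1]
  -- choose bounds
  have hch0 : ∀ i : ℕ, ∀ m j : ℕ, 1 ≤ m → m ≤ l →
      ‖(Nat.choose (p*(j+m)) i : ℚ_[p])‖ ≤ (p:ℝ)^(-(0:ℤ)) := by
    intro i m j _ _
    simpa using Padic.norm_int_le_one (p := p) (Nat.choose (p*(j+m)) i : ℤ)
  have hdvd : ∀ i, 1 ≤ i → i < p → ∀ n, 1 ≤ n → p ∣ Nat.choose (p*n) i := by
    intro i h1 h2 n hn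
    have hpn : 1 ≤ p*n := Nat.mul_pos (by omega) hn
    have key := Nat.add_one_mul_choose_eq (p*n - 1) (i-1)
    have e1 : p*n - 1 + 1 = p*n := by omega
    have e2 : i-1 + 1 = i := by omega
    rw [e1, e2] at key
    have hd : p ∣ Nat.choose (p*n) i * i := key ▸ (dvd_mul_right p n).mul_right _
    rcases (Nat.Prime.dvd_mul hp.out).mp hd with h | h
    · exact h
    · exact absurd (Nat.le_of_dvd (by omega) h) (by omega)
  have hch1 : ∀ i : ℕ, 1 ≤ i → i < p → ∀ m j : ℕ, 1 ≤ m → m ≤ l →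
      ‖(Nat.choose (p*(j+m)) i : ℚ_[p])‖ ≤ (p:ℝ)^(-(1:ℤ)) := by
    intro i hi1 hi2 m j hm _
    have hd := hdvd i hi1 hi2 (j+m) (by omega)
    have hd' : ((p:ℤ)^1) ∣ (Nat.choose (p*(j+m)) i : ℤ) := by
      simpa using Int.natCast_dvd_natCast.mpr hd
    have := (Padic.norm_int_le_pow_iff_dvd (p := p) (Nat.choose (p*(j+m)) i : ℤ) 1).mpr hd'
    simpa using this
  refine ⟨?_, ?_, ?_, ?_⟩
  · intro i hip
    have := main i 0 0 hip (hch0 i) (by omega)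
    simpa using this
  · exact main 0 ((p:ℤ)+(l:ℤ)-1) 0 (Nat.zero_le _) (hch0 0) (by omega)
  · intro i hi1 hip
    have hip' : i ≤ p := by omega
    exact main i ((p:ℤ)+(l:ℤ)-(i:ℤ)) 1 hip' (hch1 i hi1 (by omega)) (by omega)
  · exact main p ((l:ℤ)-1) 0 le_rfl (hch0 p) (by omega)
end
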